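/- arXiv:1612.03970 — 2 statements merged into one kernel-verified Lean document; each statement's English description precedes it below -/
import Mathlib

section
/- Let φ : 𝔻 → 𝔻 be a holomorphic self-map of the open unit disk with φ(0) = 0. Then for every z ∈ 𝔻 with z ≠ 0 and φ(z) ≠ 0, one has |φ'(z)| · log|z| / log|φ(z)| ≤ 1. -/
/-!
Composing `φ` on both sides with disk automorphisms moving `z` and `φ z` to `0` turns the
Schwarz lemma for the derivative at the origin into the Schwarz–Pick bound
`|φ'(z)| (1 - |z|²) ≤ 1 - |φ(z)|²`. Since `log` is concave, `s ↦ log s / (1 - s)`, minus the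
slope of its secant through `1`, is increasing on `(0, 1)`; with the Schwarz lemma `|φ(z)| ≤ |z|`
this gives `log|φ(z)| / (1 - |φ(z)|²) ≤ log|z| / (1 - |z|²)`, and the two inequalities combine
because both logarithms are negative.
-/

open scoped InnerProductSpace
open Filter ContinuousLinearMap

/-- The `n`-th approximation number (singular value) of a bounded operator:
`sₙ(T) = inf {‖T - F‖ : rank F < n}`. -/
noncomputable def approxNum {H K : Type*} [NormedAddCommGroup H] [NormedSpace ℂ H]
    [NormedAddCommGroup K] [NormedSpace ℂ K] (T : H →L[ℂ] K) (n : ℕ) : ℝ :=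
  sInf {c : ℝ | ∃ F : H →L[ℂ] K, FiniteDimensional ℂ (LinearMap.range F.toLinearMap) ∧
    Module.finrank ℂ (LinearMap.range F.toLinearMap) < n ∧ c = ‖T - F‖}

/-- The essential norm of a bounded operator: `inf {‖T - L‖ : L compact}`. -/
noncomputable def essNorm {H K : Type*} [NormedAddCommGroup H] [NormedSpace ℂ H]
    [NormedAddCommGroup K] [NormedSpace ℂ K] (T : H →L[ℂ] K) : ℝ :=
  sInf {c : ℝ | ∃ L : H →L[ℂ] K, IsCompactOperator L ∧ c = ‖T - L‖}


open Complex ComplexConjugate Metric Set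

theorem Real.log_div_one_sub_le_of_le {x y : ℝ} (hx : 0 < x) (hx1 : x ≠ 1) (hy1 : y ≠ 1)
    (hxy : x ≤ y) : log x / (1 - x) ≤ log y / (1 - y) := by
  have h := strictConcaveOn_log_Ioi.concaveOn.neg.secant_mono (a := 1) (mem_Ioi.2 one_pos) hx
    (hx.trans_le hxy) hx1 hy1 hxy
  simp only [Pi.neg_apply, log_one, neg_zero, sub_zero] at h
  rwa [← neg_sub 1 x, ← neg_sub 1 y, neg_div_neg_eq, neg_div_neg_eq] at h

theorem Real.log_div_one_sub_sq_le_of_le {x y : ℝ} (hx : 0 < x) (hx1 : x ≠ 1) (hy1 : y ≠ 1)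
    (hxy : x ≤ y) : log x / (1 - x ^ 2) ≤ log y / (1 - y ^ 2) := by
  have hy : 0 < y := hx.trans_le hxy
  have h := log_div_one_sub_le_of_le (pow_pos hx 2)
    (by rwa [Ne, pow_eq_one_iff_of_nonneg hx.le two_ne_zero])
    (by rwa [Ne, pow_eq_one_iff_of_nonneg hy.le two_ne_zero]) (pow_le_pow_left₀ hx.le hxy 2)
  rw [log_pow, log_pow, mul_div_assoc, mul_div_assoc] at h
  exact le_of_mul_le_mul_left h two_pos

noncomputable def blaschkeFactor (a w : ℂ) : ℂ := (w - a) / (1 - conj a * w)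

section blaschkeFactor

variable {a w : ℂ}

theorem one_sub_conj_mul_ne_zero (ha : ‖a‖ < 1) (hw : ‖w‖ < 1) : 1 - conj a * w ≠ 0 := by
  rw [sub_ne_zero]
  intro h
  have := congrArg norm h
  rw [norm_one, norm_mul, norm_conj] at this
  nlinarith [norm_nonneg a, norm_nonneg w]

theorem normSq_one_sub_conj_mul_sub_normSq_sub (a w : ℂ) :
    normSq (1 - conj a * w) - normSq (w - a) = (1 - normSq a) * (1 - normSq w) := by
  simp only [normSq_apply, sub_re, sub_im, mul_re, mul_im, conj_re, conj_im, one_re, one_im]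
  ring

theorem norm_blaschkeFactor_lt_one (ha : ‖a‖ < 1) (hw : ‖w‖ < 1) :
    ‖blaschkeFactor a w‖ < 1 := by
  have hden := one_sub_conj_mul_ne_zero ha hw
  rw [blaschkeFactor, norm_div, div_lt_one (norm_pos_iff.2 hden), ← sq_lt_sq₀ (norm_nonneg _)
    (norm_nonneg _), ← normSq_eq_norm_sq, ← normSq_eq_norm_sq, ← sub_pos,
    normSq_one_sub_conj_mul_sub_normSq_sub, normSq_eq_norm_sq, normSq_eq_norm_sq]
  have := pow_lt_one₀ (norm_nonneg a) ha two_ne_zero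
  have := pow_lt_one₀ (norm_nonneg w) hw two_ne_zero
  apply mul_pos <;> linarith

theorem mapsTo_blaschkeFactor_ball (ha : ‖a‖ < 1) :
    MapsTo (blaschkeFactor a) (ball 0 1) (ball 0 1) :=
  fun _ hw ↦ mem_ball_zero_iff.2 (norm_blaschkeFactor_lt_one ha (mem_ball_zero_iff.1 hw))

theorem hasDerivAt_blaschkeFactor (h : 1 - conj a * w ≠ 0) :
    HasDerivAt (blaschkeFactor a) ((1 - normSq a) / (1 - conj a * w) ^ 2) w := by
  have hnum : HasDerivAt (fun w ↦ w - a) 1 w := (hasDerivAt_id w).sub_const a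
  have hden : HasDerivAt (fun w ↦ 1 - conj a * w) (-conj a) w := by
    simpa using ((hasDerivAt_id w).const_mul (conj a)).const_sub 1
  refine (hnum.div hden h).congr_deriv ?_
  rw [normSq_eq_conj_mul_self]
  ring

theorem differentiableOn_blaschkeFactor_ball (ha : ‖a‖ < 1) :
    DifferentiableOn ℂ (blaschkeFactor a) (ball 0 1) := fun _ hw ↦
  (hasDerivAt_blaschkeFactor (one_sub_conj_mul_ne_zero ha (mem_ball_zero_iff.1 hw)))
    |>.differentiableAt.differentiableWithinAt

@[simp] theorem blaschkeFactor_self (a : ℂ) : blaschkeFactor a a = 0 := by simp [blaschkeFactor]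

@[simp] theorem blaschkeFactor_neg_zero (a : ℂ) : blaschkeFactor (-a) 0 = a := by
  simp [blaschkeFactor]

theorem hasDerivAt_blaschkeFactor_self (ha : ‖a‖ < 1) :
    HasDerivAt (blaschkeFactor a) ((1 - ‖a‖ ^ 2)⁻¹ : ℝ) a := by
  have h := one_sub_conj_mul_ne_zero ha ha
  convert hasDerivAt_blaschkeFactor h using 1
  rw [← normSq_eq_conj_mul_self, normSq_eq_norm_sq] at h ⊢
  push_cast
  field_simp

theorem hasDerivAt_blaschkeFactor_neg_zero (a : ℂ) :
    HasDerivAt (blaschkeFactor (-a)) (1 - ‖a‖ ^ 2 : ℝ) 0 := by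
  simpa [normSq_eq_norm_sq] using hasDerivAt_blaschkeFactor (a := -a) (w := 0) (by simp)

end blaschkeFactor

theorem Complex.norm_deriv_mul_le_of_mapsTo_ball {f : ℂ → ℂ} {z : ℂ}
    (hd : DifferentiableOn ℂ f (ball 0 1)) (hm : MapsTo f (ball 0 1) (ball 0 1))
    (hz : z ∈ ball 0 1) : ‖deriv f z‖ * (1 - ‖z‖ ^ 2) ≤ 1 - ‖f z‖ ^ 2 := by
  have hz1 : ‖z‖ < 1 := mem_ball_zero_iff.1 hz
  have hfz1 : ‖f z‖ < 1 := mem_ball_zero_iff.1 (hm hz)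
  have hz2 : 0 < 1 - ‖z‖ ^ 2 := by nlinarith [norm_nonneg z]
  have hfz2 : 0 < 1 - ‖f z‖ ^ 2 := by nlinarith [norm_nonneg (f z)]
  have hmz : MapsTo (blaschkeFactor (-z)) (ball 0 1) (ball 0 1) :=
    mapsTo_blaschkeFactor_ball (by simpa)
  set g := blaschkeFactor (f z) ∘ f ∘ blaschkeFactor (-z)
  have hgm : MapsTo g (ball 0 1) (ball 0 1) :=
    (mapsTo_blaschkeFactor_ball hfz1).comp (hm.comp hmz)
  have hgd : DifferentiableOn ℂ g (ball 0 1) :=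
    (differentiableOn_blaschkeFactor_ball hfz1).comp
      (hd.comp (differentiableOn_blaschkeFactor_ball (by simpa)) hmz) (hm.comp hmz)
  have hg0 : g 0 = 0 := by simp [g]
  have hderiv : HasDerivAt g
      (((1 - ‖f z‖ ^ 2)⁻¹ : ℝ) * deriv f z * ((1 - ‖z‖ ^ 2 : ℝ) : ℂ)) 0 := by
    have hf : HasDerivAt f (deriv f z) z :=
      (hd.differentiableAt (isOpen_ball.mem_nhds hz)).hasDerivAt
    exact ((hasDerivAt_blaschkeFactor_self hfz1).comp z hf).comp_of_eq 0
      (hasDerivAt_blaschkeFactor_neg_zero z) (blaschkeFactor_neg_zero z).symm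
  have hschwarz := norm_deriv_le_one_of_mapsTo_ball hgd
    (by rw [hg0]; exact hgm.mono_right ball_subset_closedBall) one_pos
  rw [hderiv.deriv, norm_mul, norm_mul, norm_real, norm_real,
    Real.norm_of_nonneg (inv_nonneg.2 hfz2.le), Real.norm_of_nonneg hz2.le,
    mul_comm _ ‖deriv f z‖, mul_assoc, ← div_eq_inv_mul,
    ← mul_div_assoc, div_le_one hfz2] at hschwarz
  exact hschwarz

theorem stmt1_general (φ : ℂ → ℂ) (hd : DifferentiableOn ℂ φ (Metric.ball 0 1))
    (hm : Set.MapsTo φ (Metric.ball 0 1) (Metric.ball 0 1)) (h0 : φ 0 = 0)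
    (z : ℂ) (hz : z ∈ Metric.ball (0 : ℂ) 1) (hφz : φ z ≠ 0) :
    ‖deriv φ z‖ * Real.log ‖z‖ / Real.log ‖φ z‖ ≤ 1 := by
  have hz1 : ‖z‖ < 1 := mem_ball_zero_iff.1 hz
  have hφz0 : 0 < ‖φ z‖ := norm_pos_iff.2 hφz
  have hschwarz : ‖φ z‖ ≤ ‖z‖ :=
    norm_le_norm_of_mapsTo_ball hd (hm.mono_right ball_subset_closedBall) h0 hz1
  have hpick := norm_deriv_mul_le_of_mapsTo_ball hd hm hz
  have hz2 : 0 < 1 - ‖z‖ ^ 2 := by nlinarith [norm_nonneg z]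
  have hφz2 : 0 < 1 - ‖φ z‖ ^ 2 := by nlinarith
  have hmono : Real.log ‖φ z‖ / (1 - ‖φ z‖ ^ 2) ≤ Real.log ‖z‖ / (1 - ‖z‖ ^ 2) :=
    Real.log_div_one_sub_sq_le_of_le hφz0 (hschwarz.trans_lt hz1).ne hz1.ne hschwarz
  have hlogz : Real.log ‖z‖ / (1 - ‖z‖ ^ 2) ≤ 0 :=
    div_nonpos_of_nonpos_of_nonneg (Real.log_nonpos (norm_nonneg z) hz1.le) hz2.le
  rw [div_le_one_of_neg (Real.log_neg hφz0 (hschwarz.trans_lt hz1))]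
  calc Real.log ‖φ z‖
      = Real.log ‖φ z‖ / (1 - ‖φ z‖ ^ 2) * (1 - ‖φ z‖ ^ 2) :=
        (div_mul_cancel₀ _ hφz2.ne').symm
    _ ≤ Real.log ‖z‖ / (1 - ‖z‖ ^ 2) * (1 - ‖φ z‖ ^ 2) :=
        mul_le_mul_of_nonneg_right hmono hφz2.le
    _ ≤ Real.log ‖z‖ / (1 - ‖z‖ ^ 2) * (‖deriv φ z‖ * (1 - ‖z‖ ^ 2)) :=
        mul_le_mul_of_nonpos_left hpick hlogz
    _ = ‖deriv φ z‖ * Real.log ‖z‖ := by field_simp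

/-- For a holomorphic self-map `φ` of the unit disk with `φ(0) = 0`, one has
`|φ'(z)| · log|z| / log|φ(z)| ≤ 1` whenever `z ≠ 0` and `φ(z) ≠ 0`. -/
theorem stmt1 (φ : ℂ → ℂ) (hd : DifferentiableOn ℂ φ (Metric.ball 0 1))
    (hm : Set.MapsTo φ (Metric.ball 0 1) (Metric.ball 0 1)) (h0 : φ 0 = 0)
    (z : ℂ) (hz : z ∈ Metric.ball (0 : ℂ) 1) (hz0 : z ≠ 0) (hφz : φ z ≠ 0) :
    ‖deriv φ z‖ * Real.log ‖z‖ / Real.log ‖φ z‖ ≤ 1 :=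
  stmt1_general φ hd hm h0 z hz hφz
end

section
/- Let T ≥ 0 be a bounded positive operator on a Hilbert space with ‖T‖ₑ = 1 and ∏ₙ max(1, sₙ(T)) < ∞. Let P be the spectral projection of T for the interval (1, ∞). Then T = (T·(1-P) + P) + (T - 1)P, where T(1-P) + P is a contraction and (T-1)P is trace class. -/
/-!
Let `Q = 1 - P`. Since `T` commutes with `P`, the operator `T(1-P) + P = QTQ + P` is positive
with quadratic form `⟪TQx, Qx⟫ + ‖Px‖² ≤ ‖Qx‖² + ‖Px‖² = ‖x‖²`, hence a contraction.

For the trace class part put `X = (T-1)P ≥ 0`. Given `F` of rank `≤ k`, let `V = P(range F)`.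
The compression of `X` to `Vᗮ` differs from `X` by an operator of rank `≤ 2k`, and for `z ∈ Vᗮ`
and `m = Pz` we have `⟪Fm, m⟫ = 0`, so `⟪Xz, z⟫ = ⟪(T-F)m, m⟫ - ‖m‖² ≤ (‖T-F‖-1)‖z‖²`. Hence
`s_{2k+1}(X) ≤ s_{k+1}(T) - 1`. Finally `‖T‖ₑ = 1` forces `s_n(T) ≥ 1`, so
`∑ (s_n(T) - 1) ≤ ∏ s_n(T) - 1` is bounded.
-/

open scoped InnerProductSpace
open Filter ContinuousLinearMap

/-- An operator between Hilbert spaces is trace class iff its approximation numbers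
`s₁(X), s₂(X), …` are summable. -/
def IsTraceClassOp {H K : Type*} [NormedAddCommGroup H] [NormedSpace ℂ H]
    [NormedAddCommGroup K] [NormedSpace ℂ K] (X : H →L[ℂ] K) : Prop :=
  Summable fun n : ℕ => approxNum X (n + 1)

open Submodule

theorem Finset.sum_sub_one_le_prod_sub_one {ι : Type*} (s : Finset ι) {f : ι → ℝ}
    (hf : ∀ i ∈ s, 1 ≤ f i) : ∑ i ∈ s, (f i - 1) ≤ ∏ i ∈ s, f i - 1 := by
  induction s using Finset.cons_induction with
  | empty => simp
  | cons a s _ ih =>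
    rw [Finset.sum_cons, Finset.prod_cons]
    have hfa : 1 ≤ f a := hf a (Finset.mem_cons_self a s)
    have hs : ∀ i ∈ s, 1 ≤ f i := fun i hi ↦ hf i (Finset.mem_cons_of_mem hi)
    have hprod : 1 ≤ ∏ i ∈ s, f i := Finset.one_le_prod hs
    nlinarith [ih hs]

theorem summable_sub_one_of_prod_range_le {f : ℕ → ℝ} (hf : ∀ n, 1 ≤ f n) {C : ℝ}
    (hC : ∀ N, ∏ n ∈ Finset.range N, f n ≤ C) : Summable fun n ↦ f n - 1 :=
  summable_of_sum_range_le (fun n ↦ sub_nonneg.2 (hf n)) fun N ↦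
    (Finset.sum_sub_one_le_prod_sub_one _ fun n _ ↦ hf n).trans (sub_le_sub_right (hC N) 1)

section ApproxNum

variable {E F : Type*} [NormedAddCommGroup E] [NormedSpace ℂ E] [NormedAddCommGroup F]
  [NormedSpace ℂ F]

theorem approxNum_nonneg (T : E →L[ℂ] F) (n : ℕ) : 0 ≤ approxNum T n :=
  Real.sInf_nonneg (by rintro c ⟨G, -, -, rfl⟩; exact norm_nonneg _)

theorem approxNum_le_norm_sub (T G : E →L[ℂ] F) {n : ℕ}
    [FiniteDimensional ℂ (LinearMap.range G.toLinearMap)]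
    (hG : Module.finrank ℂ (LinearMap.range G.toLinearMap) < n) :
    approxNum T n ≤ ‖T - G‖ :=
  csInf_le ⟨0, by rintro c ⟨G, -, -, rfl⟩; exact norm_nonneg _⟩
    ⟨G, inferInstance, hG, rfl⟩

theorem le_approxNum {T : E →L[ℂ] F} {n : ℕ} (hn : 0 < n) {c : ℝ}
    (h : ∀ G : E →L[ℂ] F, FiniteDimensional ℂ (LinearMap.range G.toLinearMap) →
      Module.finrank ℂ (LinearMap.range G.toLinearMap) < n → c ≤ ‖T - G‖) :
    c ≤ approxNum T n := by
  have hzero : LinearMap.range (0 : E →L[ℂ] F).toLinearMap = ⊥ := by simp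
  refine le_csInf ⟨‖T - 0‖, 0, ?_, ?_, rfl⟩ ?_
  · rw [hzero]
    infer_instance
  · rw [hzero, finrank_bot]
    exact hn
  · rintro c ⟨G, hG, hGn, rfl⟩
    exact h G hG hGn

theorem approxNum_le_approxNum (T : E →L[ℂ] F) {a b : ℕ} (ha : 0 < a) (hab : a ≤ b) :
    approxNum T b ≤ approxNum T a :=
  le_approxNum ha fun _ _ hG ↦ approxNum_le_norm_sub _ _ (hG.trans_le hab)

theorem isCompactOperator_of_finiteDimensional_range (G : E →L[ℂ] F)
    [FiniteDimensional ℂ (LinearMap.range G.toLinearMap)] : IsCompactOperator G :=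
  (isCompactOperator_of_locallyCompactSpace_dom G.rangeRestrict).clm_comp (subtypeL _)

theorem essNorm_le_approxNum (T : E →L[ℂ] F) {n : ℕ} (hn : 0 < n) :
    essNorm T ≤ approxNum T n :=
  le_approxNum hn fun G _ _ ↦
    csInf_le ⟨0, by rintro c ⟨L, -, rfl⟩; exact norm_nonneg _⟩
      ⟨G, isCompactOperator_of_finiteDimensional_range G, rfl⟩

theorem isTraceClassOp_of_approxNum_le {X : E →L[ℂ] F} {g : ℕ → ℝ} (hg : Summable g)
    (hX : ∀ k, approxNum X (2 * k + 1) ≤ g k) : IsTraceClassOp X :=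
  Summable.even_add_odd (hg.of_nonneg_of_le (fun _ ↦ approxNum_nonneg _ _) hX)
    (hg.of_nonneg_of_le (fun _ ↦ approxNum_nonneg _ _) fun k ↦
      (approxNum_le_approxNum X (by omega) (by omega)).trans (hX k))

theorem summable_approxNum_sub_one {T : E →L[ℂ] F} (he : 1 ≤ essNorm T) {C : ℝ}
    (hC : ∀ N : ℕ, ∏ n ∈ Finset.Icc 1 N, max 1 (approxNum T n) ≤ C) :
    Summable fun k ↦ approxNum T (k + 1) - 1 := by
  have hone {n : ℕ} (hn : 0 < n) : 1 ≤ approxNum T n := he.trans (essNorm_le_approxNum T hn)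
  refine summable_sub_one_of_prod_range_le (C := C) (fun k ↦ hone k.succ_pos) fun N ↦ ?_
  have hprod : ∏ n ∈ Finset.Icc 1 N, max 1 (approxNum T n) =
      ∏ k ∈ Finset.range N, approxNum T (k + 1) := by
    rw [Finset.range_eq_Ico, Finset.prod_Ico_add' (approxNum T), zero_add,
      ← Finset.Ico_add_one_right_eq_Icc]
    exact Finset.prod_congr rfl fun n hn ↦ max_eq_right (hone (Finset.mem_Ico.1 hn).1)
  exact hprod ▸ hC N

end ApproxNum

section Hilbert

variable {H : Type*} [NormedAddCommGroup H] [InnerProductSpace ℂ H]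

theorem re_inner_apply_self_le_norm_mul (A : H →L[ℂ] H) (x : H) :
    (⟪A x, x⟫_ℂ).re ≤ ‖A‖ * ‖x‖ ^ 2 :=
  calc (⟪A x, x⟫_ℂ).re ≤ ‖A x‖ * ‖x‖ := re_inner_le_norm (𝕜 := ℂ) _ _
    _ ≤ ‖A‖ * ‖x‖ * ‖x‖ := by gcongr; exact A.le_opNorm x
    _ = ‖A‖ * ‖x‖ ^ 2 := by ring

variable (K : Submodule ℂ H) [K.HasOrthogonalProjection]

theorem inner_apply_starProjection_self {A : H →L[ℂ] H} (hA : Commute A K.starProjection)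
    (x : H) :
    ⟪A (K.starProjection x), x⟫_ℂ = ⟪A (K.starProjection x), K.starProjection x⟫_ℂ := by
  have hfix : K.starProjection (A (K.starProjection x)) = A (K.starProjection x) := by
    change (K.starProjection * A) (K.starProjection x) = _
    rw [← hA.eq]
    change A ((K.starProjection * K.starProjection) x) = _
    rw [K.isIdempotentElem_starProjection.eq]
  rw [← hfix, inner_starProjection_left_eq_right, hfix]

theorem approxNum_le_norm_compression (X : H →L[ℂ] H) (V : Submodule ℂ H)
    [FiniteDimensional ℂ V] {n : ℕ} (hn : 2 * Module.finrank ℂ V < n) :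
    approxNum X n ≤ ‖Vᗮ.starProjection ∘L X ∘L Vᗮ.starProjection‖ := by
  set R := V.starProjection
  set G := X - Vᗮ.starProjection ∘L X ∘L Vᗮ.starProjection
  have hG : ∀ y, G y = R (X y - X (R y)) + X (R y) := by
    have : G = R * X - R * X * R + X * R := by
      simp only [G, starProjection_orthogonal', ← ContinuousLinearMap.mul_def]
      noncomm_ring
    intro y
    rw [this, add_apply, sub_apply, map_sub]
    rfl
  have hrange : LinearMap.range G.toLinearMap ≤ V ⊔ V.map X.toLinearMap := by
    rintro _ ⟨y, rfl⟩
    rw [coe_coe, hG]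
    exact add_mem (mem_sup_left (V.starProjection_apply_mem _))
      (mem_sup_right (mem_map_of_mem (V.starProjection_apply_mem y)))
  have : FiniteDimensional ℂ (LinearMap.range G.toLinearMap) := finiteDimensional_of_le hrange
  have hrank : Module.finrank ℂ (LinearMap.range G.toLinearMap) < n :=
    calc Module.finrank ℂ (LinearMap.range G.toLinearMap)
        ≤ Module.finrank ℂ V + Module.finrank ℂ (V.map X.toLinearMap) :=
          (finrank_mono hrange).trans (finrank_add_le_finrank_add_finrank _ _)
      _ ≤ 2 * Module.finrank ℂ V := by linarith [finrank_map_le X.toLinearMap V]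
      _ < n := hn
  simpa only [G, sub_sub_cancel] using approxNum_le_norm_sub X G hrank

variable [CompleteSpace H]

theorem norm_le_of_isPositive_of_re_inner_le {S : H →L[ℂ] H} (hS : S.IsPositive) {t : ℝ}
    (ht : 0 ≤ t) (h : ∀ x, (⟪S x, x⟫_ℂ).re ≤ t * ‖x‖ ^ 2) : ‖S‖ ≤ t := by
  rw [CStarAlgebra.norm_le_iff_le_algebraMap S ht ((nonneg_iff_isPositive S).2 hS),
    ContinuousLinearMap.le_def]
  refine ⟨(IsSelfAdjoint.algebraMap _ (.all t)).isSymmetric.sub hS.isSymmetric, fun x ↦ ?_⟩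
  have hx : (⟪x, x⟫_ℂ).re = ‖x‖ ^ 2 := inner_self_eq_norm_sq (𝕜 := ℂ) x
  simp only [reApplyInnerSelf, sub_apply, inner_sub_left, Algebra.algebraMap_eq_smul_one,
    smul_apply, one_apply_eq_self, map_sub, ← Complex.coe_smul, inner_smul_left,
    Complex.conj_ofReal]
  change 0 ≤ (↑t * ⟪x, x⟫_ℂ).re - (⟪S x, x⟫_ℂ).re
  rw [Complex.re_ofReal_mul, hx, sub_nonneg]
  exact h x

theorem isPositive_comp_starProjection {A : H →L[ℂ] H} (hA : IsSelfAdjoint A)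
    (hAK : Commute A K.starProjection) (hK : ∀ x ∈ K, 0 ≤ (⟪A x, x⟫_ℂ).re) :
    (A ∘L K.starProjection).IsPositive := by
  refine isPositive_def'.2
    ⟨(hA.commute_iff (isSelfAdjoint_starProjection K)).1 hAK, fun x ↦ ?_⟩
  rw [reApplyInnerSelf_apply, comp_apply, inner_apply_starProjection_self K hAK]
  exact hK _ (K.starProjection_apply_mem x)

theorem norm_comp_one_sub_starProjection_add_starProjection_le_one {T : H →L[ℂ] H}
    (hT : T.IsPositive) (hTK : Commute T K.starProjection)
    (hK : ∀ x ∈ Kᗮ, (⟪T x, x⟫_ℂ).re ≤ ‖x‖ ^ 2) :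
    ‖T ∘L (1 - K.starProjection) + K.starProjection‖ ≤ 1 := by
  rw [← starProjection_orthogonal']
  have hTK' : Commute T Kᗮ.starProjection := by
    rw [starProjection_orthogonal']
    exact (Commute.one_right T).sub_right hTK
  have hpos : (T ∘L Kᗮ.starProjection + K.starProjection).IsPositive :=
    (isPositive_comp_starProjection Kᗮ hT.isSelfAdjoint hTK' fun x _ ↦
      hT.re_inner_nonneg_left x).add (.of_isStarProjection isStarProjection_starProjection)
  refine norm_le_of_isPositive_of_re_inner_le hpos zero_le_one fun x ↦ ?_
  have hP : (⟪K.starProjection x, x⟫_ℂ).re = ‖K.starProjection x‖ ^ 2 :=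
    K.re_inner_starProjection_eq_normSq x
  rw [add_apply, comp_apply, inner_add_left, Complex.add_re, hP,
    inner_apply_starProjection_self Kᗮ hTK', one_mul, norm_sq_eq_add_norm_sq_starProjection x K]
  linarith [hK _ (Kᗮ.starProjection_apply_mem x)]

theorem norm_compression_sub_one_comp_starProjection_le {T F : H →L[ℂ] H}
    (hT : IsSelfAdjoint T) (hTK : Commute T K.starProjection)
    (hK : ∀ x ∈ K, ‖x‖ ^ 2 ≤ (⟪T x, x⟫_ℂ).re)
    (V : Submodule ℂ H) [V.HasOrthogonalProjection]
    (hV : (LinearMap.range F.toLinearMap).map K.starProjection.toLinearMap ≤ V)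
    (hF : 1 ≤ ‖T - F‖) :
    ‖Vᗮ.starProjection ∘L ((T - 1) ∘L K.starProjection) ∘L Vᗮ.starProjection‖ ≤
      ‖T - F‖ - 1 := by
  have hTK' : Commute (T - 1) K.starProjection := hTK.sub_left (Commute.one_left _)
  have hX : ((T - 1) ∘L K.starProjection).IsPositive :=
    isPositive_comp_starProjection K (hT.sub (.one _)) hTK' fun x hx ↦ by
      have hx2 : (⟪x, x⟫_ℂ).re = ‖x‖ ^ 2 := inner_self_eq_norm_sq (𝕜 := ℂ) x
      rw [sub_apply, one_apply_eq_self, inner_sub_left, Complex.sub_re, hx2, sub_nonneg]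
      exact hK x hx
  refine norm_le_of_isPositive_of_re_inner_le (hX.conj_starProjection Vᗮ) (sub_nonneg.2 hF)
    fun y ↦ ?_
  set z := Vᗮ.starProjection y
  set m := K.starProjection z
  have hFm : ⟪F m, m⟫_ℂ = 0 := by
    rw [← inner_starProjection_left_eq_right]
    exact inner_right_of_mem_orthogonal (hV (mem_map_of_mem (LinearMap.mem_range_self _ m)))
      (Vᗮ.starProjection_apply_mem y)
  have hm : ‖m‖ ≤ ‖y‖ :=
    (K.norm_starProjection_apply_le z).trans (Vᗮ.norm_starProjection_apply_le y)
  have hm2 : (⟪m, m⟫_ℂ).re = ‖m‖ ^ 2 := inner_self_eq_norm_sq (𝕜 := ℂ) m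
  calc (⟪(Vᗮ.starProjection ∘L ((T - 1) ∘L K.starProjection) ∘L Vᗮ.starProjection) y,
        y⟫_ℂ).re = (⟪(T - 1) m, m⟫_ℂ).re := by
        rw [comp_apply, inner_starProjection_left_eq_right, comp_apply, comp_apply,
          inner_apply_starProjection_self K hTK']
    _ = (⟪(T - F) m, m⟫_ℂ).re - ‖m‖ ^ 2 := by
        simp only [sub_apply, one_apply_eq_self, inner_sub_left, hFm, Complex.sub_re, hm2,
          sub_zero]
    _ ≤ ‖T - F‖ * ‖m‖ ^ 2 - ‖m‖ ^ 2 := by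
        gcongr
        exact re_inner_apply_self_le_norm_mul _ m
    _ = (‖T - F‖ - 1) * ‖m‖ ^ 2 := by ring
    _ ≤ (‖T - F‖ - 1) * ‖y‖ ^ 2 := by gcongr

theorem approxNum_sub_one_comp_starProjection_le {T : H →L[ℂ] H} (hT : IsSelfAdjoint T)
    (he : 1 ≤ essNorm T) (hTK : Commute T K.starProjection)
    (hK : ∀ x ∈ K, ‖x‖ ^ 2 ≤ (⟪T x, x⟫_ℂ).re) (k : ℕ) :
    approxNum ((T - 1) ∘L K.starProjection) (2 * k + 1) ≤ approxNum T (k + 1) - 1 := by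
  rw [le_sub_iff_add_le]
  refine le_approxNum k.succ_pos fun F _ hFk ↦ ?_
  set V := (LinearMap.range F.toLinearMap).map K.starProjection.toLinearMap
  have hV : Module.finrank ℂ V ≤ k := (finrank_map_le _ _).trans (by omega)
  have hF : 1 ≤ ‖T - F‖ :=
    he.trans ((essNorm_le_approxNum T k.succ_pos).trans (approxNum_le_norm_sub T F hFk))
  linarith [approxNum_le_norm_compression ((T - 1) ∘L K.starProjection) V (n := 2 * k + 1)
      (by omega),
    norm_compression_sub_one_comp_starProjection_le K hT hTK hK V le_rfl hF]

end Hilbert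

/-- Let `T ≥ 0` with `‖T‖ₑ = 1` and `∏ₙ max(1, sₙ(T)) < ∞`, and let `P` be the spectral
projection of `T` for `(1, ∞)`.  Then `T = (T(1-P) + P) + (T-1)P`, where `T(1-P) + P` is a
contraction and `(T-1)P` is trace class. -/
theorem stmt5 {H : Type*} [NormedAddCommGroup H] [InnerProductSpace ℂ H] [CompleteSpace H]
    (T : H →L[ℂ] H) (hT : T.IsPositive) (he : essNorm T = 1)
    (hprod : ∃ C : ℝ, ∀ N : ℕ, ∏ n ∈ Finset.Icc 1 N, max 1 (approxNum T n) ≤ C)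
    (P : H →L[ℂ] H) (hPsa : ContinuousLinearMap.adjoint P = P) (hPidem : P ∘L P = P)
    (hPT : T ∘L P = P ∘L T)
    (hPrange : ∀ x : H, P x = x → ‖x‖ ^ 2 ≤ Complex.re ⟪T x, x⟫_ℂ)
    (hPker : ∀ x : H, P x = 0 → Complex.re ⟪T x, x⟫_ℂ ≤ ‖x‖ ^ 2) :
    T = (T ∘L (1 - P) + P) + (T ∘L P - P) ∧
      ‖T ∘L (1 - P) + P‖ ≤ 1 ∧ IsTraceClassOp (T ∘L P - P) := by
  obtain ⟨K, _, rfl⟩ := isStarProjection_iff_eq_starProjection.mp ⟨hPidem, hPsa⟩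
  have hTK : Commute T K.starProjection := hPT
  have hK : ∀ x ∈ K, ‖x‖ ^ 2 ≤ (⟪T x, x⟫_ℂ).re :=
    fun x hx ↦ hPrange x (starProjection_eq_self_iff.mpr hx)
  have hKperp : ∀ x ∈ Kᗮ, (⟪T x, x⟫_ℂ).re ≤ ‖x‖ ^ 2 :=
    fun x hx ↦ hPker x ((starProjection_apply_eq_zero_iff K).mpr hx)
  obtain ⟨C, hC⟩ := hprod
  have hX : T ∘L K.starProjection - K.starProjection = (T - 1) ∘L K.starProjection := by
    simp only [← ContinuousLinearMap.mul_def, sub_mul, one_mul]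
  refine ⟨by simp only [← ContinuousLinearMap.mul_def, mul_sub, mul_one]; abel,
    norm_comp_one_sub_starProjection_add_starProjection_le_one K hT hTK hKperp, ?_⟩
  rw [hX]
  exact isTraceClassOp_of_approxNum_le (summable_approxNum_sub_one he.ge hC)
    (approxNum_sub_one_comp_starProjection_le K hT.isSelfAdjoint he.ge hTK hK)
end
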